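/- arXiv:2401.00659 — 2 statements merged into one kernel-verified Lean document; each statement's English description precedes it below -/
import Mathlib

section
/- Greedy step lemma: let S be a set of candidate datasets, let B > 0 be a budget, and suppose d ∉ S maximizes the cost-effectiveness ratio (𝒟(S ∪ {e}) − 𝒟(S)) / p(e) over all candidate datasets e ∉ S. Then for every set S* of candidate datasets with ∑_{e ∈ S*} p(e) ≤ B, the marginal gain of d satisfies 𝒟(S ∪ {d}) − 𝒟(S) ≥ (p(d) / B) · (𝒟(S*) − 𝒟(S)). -/
/-- The distinctiveness of a finite set `S` of candidate datasets. -/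
def distinctiveness {α ι : Type*} [DecidableEq α] (f₀ : Finset α) (f : ι → Finset α)
    (S : Finset ι) : ℕ := (f₀ ∪ S.biUnion f).card

/-- Greedy step lemma: if `d ∉ S` maximizes the cost-effectiveness ratio
`(𝒟(S ∪ {e}) − 𝒟(S)) / p(e)` over all candidate datasets `e ∉ S`, then for every
set `S*` of total price at most the budget `B`,
`𝒟(S ∪ {d}) − 𝒟(S) ≥ (p(d)/B) · (𝒟(S*) − 𝒟(S))`. -/
theorem greedy_step {α ι : Type*} [DecidableEq α] [Fintype ι] [DecidableEq ι]
    (f₀ : Finset α) (f : ι → Finset α) (p : ι → ℝ) (hp : ∀ e, 0 < p e)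
    (B : ℝ) (hB : 0 < B) (S : Finset ι) (d : ι) (hd : d ∉ S)
    (hmax : ∀ e : ι, e ∉ S →
      ((distinctiveness f₀ f (insert e S) : ℝ) - distinctiveness f₀ f S) / p e ≤
        ((distinctiveness f₀ f (insert d S) : ℝ) - distinctiveness f₀ f S) / p d)
    (Sstar : Finset ι) (hfeas : ∑ e ∈ Sstar, p e ≤ B) :
    (distinctiveness f₀ f (insert d S) : ℝ) - distinctiveness f₀ f S ≥
      (p d / B) * ((distinctiveness f₀ f Sstar : ℝ) - distinctiveness f₀ f S) := by
  classical
  set A := f₀ ∪ S.biUnion f with hA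
  have hDS : distinctiveness f₀ f S = A.card := rfl
  have hmarg : ∀ e : ι, distinctiveness f₀ f (insert e S) = A.card + (f e \ A).card := by
    intro e
    have h1 : f₀ ∪ (insert e S).biUnion f = A ∪ f e := by
      rw [Finset.biUnion_insert, hA]
      ac_rfl
    have h2 : (A ∪ f e).card = A.card + (f e \ A).card := by
      rw [Finset.union_comm, ← Finset.card_sdiff_add_card, Nat.add_comm]
    show (f₀ ∪ (insert e S).biUnion f).card = A.card + (f e \ A).card
    rw [h1]; exact h2
  set r : ℝ := ((distinctiveness f₀ f (insert d S) : ℝ) - distinctiveness f₀ f S) / p d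
    with hr
  have hr0 : 0 ≤ r := by
    apply div_nonneg _ (hp d).le
    rw [hmarg d, hDS]
    push_cast
    have : (0:ℝ) ≤ ((f d \ A).card : ℝ) := Nat.cast_nonneg _
    linarith
  -- marginal bound for each e ∉ S
  have hmb : ∀ e : ι, e ∉ S → ((f e \ A).card : ℝ) ≤ p e * r := by
    intro e he
    have := hmax e he
    rw [div_le_iff₀ (hp e)] at this
    have h2 : ((distinctiveness f₀ f (insert e S) : ℝ) - distinctiveness f₀ f S)
        = ((f e \ A).card : ℝ) := by
      rw [hmarg e, hDS]; push_cast; ring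
    rw [h2] at this
    linarith
  -- combinatorial bound
  have hcomb : distinctiveness f₀ f Sstar ≤
      A.card + ∑ e ∈ Sstar \ S, (f e \ A).card := by
    have hsub : f₀ ∪ Sstar.biUnion f ⊆
        A ∪ (Sstar \ S).biUnion (fun e => f e \ A) := by
      intro x hx
      rcases Finset.mem_union.1 hx with hx | hx
      · exact Finset.mem_union_left _ (Finset.mem_union_left _ hx)
      · rcases Finset.mem_biUnion.1 hx with ⟨e, heS, hxe⟩
        by_cases hxA : x ∈ A
        · exact Finset.mem_union_left _ hxA
        · by_cases heS' : e ∈ S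
          · exact absurd (Finset.mem_union_right _
              (Finset.mem_biUnion.2 ⟨e, heS', hxe⟩)) hxA
          · exact Finset.mem_union_right _ (Finset.mem_biUnion.2
              ⟨e, Finset.mem_sdiff.2 ⟨heS, heS'⟩, Finset.mem_sdiff.2 ⟨hxe, hxA⟩⟩)
    calc distinctiveness f₀ f Sstar
        ≤ (A ∪ (Sstar \ S).biUnion (fun e => f e \ A)).card :=
          Finset.card_le_card hsub
      _ ≤ A.card + ((Sstar \ S).biUnion (fun e => f e \ A)).card :=
          Finset.card_union_le _ _
      _ ≤ A.card + ∑ e ∈ Sstar \ S, (f e \ A).card := by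
          gcongr
          exact Finset.card_biUnion_le
  -- sum bound
  have hsum : ∑ e ∈ Sstar \ S, ((f e \ A).card : ℝ) ≤ B * r := by
    calc ∑ e ∈ Sstar \ S, ((f e \ A).card : ℝ)
        ≤ ∑ e ∈ Sstar \ S, p e * r := by
          apply Finset.sum_le_sum
          intro e he
          exact hmb e (Finset.mem_sdiff.1 he).2
      _ = (∑ e ∈ Sstar \ S, p e) * r := by rw [← Finset.sum_mul]
      _ ≤ B * r := by
          apply mul_le_mul_of_nonneg_right _ hr0
          calc ∑ e ∈ Sstar \ S, p e ≤ ∑ e ∈ Sstar, p e :=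
                Finset.sum_le_sum_of_subset_of_nonneg (Finset.sdiff_subset)
                  (fun e _ _ => (hp e).le)
            _ ≤ B := hfeas
  have hmain : (distinctiveness f₀ f Sstar : ℝ) - distinctiveness f₀ f S ≤ B * r := by
    have h1 : (distinctiveness f₀ f Sstar : ℝ) ≤
        A.card + ∑ e ∈ Sstar \ S, ((f e \ A).card : ℝ) := by
      have := hcomb
      push_cast
      exact_mod_cast this
    rw [hDS]
    push_cast
    linarith
  have hpd0 : (0:ℝ) < p d / B := div_pos (hp d) hB
  have hfinal : (p d / B) * ((distinctiveness f₀ f Sstar : ℝ) - distinctiveness f₀ f S)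
      ≤ (p d / B) * (B * r) := mul_le_mul_of_nonneg_left hmain hpd0.le
  have heq : (p d / B) * (B * r) =
      (distinctiveness f₀ f (insert d S) : ℝ) - distinctiveness f₀ f S := by
    have h1 : p d / B * (B * r) = p d * r := by field_simp
    rw [h1, hr, mul_comm, div_mul_cancel₀ _ (hp d).ne']
  linarith [hfinal, heq.symm.le]
end

section
/- Budget-violation bound (invoked Khuller–Moss–Naor lemma in the paper's setting): let B > 0 be a budget and let d_1, …, d_{m+1} be distinct candidate datasets such that, writing S_i = {d_1, …, d_i} (with S_0 = ∅), each d_i maximizes the ratio (𝒟(S_{i−1} ∪ {e}) − 𝒟(S_{i−1})) / p(e) over all candidate datasets e ∉ S_{i−1}, each p(d_i) ≤ B, and ∑_{i=1}^{m+1} p(d_i) > B. Then for every set S* of candidate datasets with total price at most B, 𝒟(S_{m+1}) ≥ (1 − 1/e) · 𝒟(S*). -/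
open Finset

section Coverage

variable {α ι : Type*} [DecidableEq α] (f₀ : Finset α) (f : ι → Finset α)

theorem distinctiveness_mono : Monotone (distinctiveness f₀ f) :=
  fun _ _ h ↦
    card_le_card (union_subset_union subset_rfl (biUnion_subset_biUnion_of_subset_left f h))

theorem distinctiveness_le_add_sum_card_sdiff (S T : Finset ι) :
    distinctiveness f₀ f T ≤
      distinctiveness f₀ f S + ∑ e ∈ T, #(f e \ (f₀ ∪ S.biUnion f)) := by
  have hcover : f₀ ∪ T.biUnion f ⊆
      (f₀ ∪ S.biUnion f) ∪ T.biUnion (fun e ↦ f e \ (f₀ ∪ S.biUnion f)) := by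
    intro x
    simp only [mem_union, mem_biUnion, mem_sdiff]
    grind
  calc distinctiveness f₀ f T
      ≤ #(f₀ ∪ S.biUnion f) + #(T.biUnion fun e ↦ f e \ (f₀ ∪ S.biUnion f)) :=
        (card_le_card hcover).trans (card_union_le _ _)
    _ ≤ _ := Nat.add_le_add_left card_biUnion_le _

variable [DecidableEq ι]

theorem distinctiveness_insert (S : Finset ι) (e : ι) :
    distinctiveness f₀ f (insert e S) =
      distinctiveness f₀ f S + #(f e \ (f₀ ∪ S.biUnion f)) := by
  unfold distinctiveness
  rw [biUnion_insert, union_left_comm, union_comm, add_comm, card_sdiff_add_card, union_comm]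

end Coverage

section Greedy

variable {ι : Type*} [DecidableEq ι]

def marginalGain (F : Finset ι → ℝ) (S : Finset ι) (e : ι) : ℝ := F (insert e S) - F S

theorem distinctiveness_le_add_sum_marginalGain {α : Type*} [DecidableEq α] (f₀ : Finset α)
    (f : ι → Finset α) (S T : Finset ι) :
    (distinctiveness f₀ f T : ℝ) ≤ distinctiveness f₀ f S +
      ∑ e ∈ T, marginalGain (fun S ↦ (distinctiveness f₀ f S : ℝ)) S e := by
  simp only [marginalGain, distinctiveness_insert, Nat.cast_add, add_sub_cancel_left]
  exact_mod_cast distinctiveness_le_add_sum_card_sdiff f₀ f S T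

variable {F : Finset ι → ℝ} {p : ι → ℝ} {B : ℝ}

theorem marginalGain_nonneg (hF : Monotone F) (S : Finset ι) (e : ι) :
    0 ≤ marginalGain F S e :=
  sub_nonneg.2 (hF (subset_insert e S))

theorem sub_le_mul_marginalGain_div_of_greedy (hF : Monotone F) (hp : ∀ e, 0 < p e)
    {S T : Finset ι} {x : ι} (hsub : F T ≤ F S + ∑ e ∈ T, marginalGain F S e)
    (hT : ∑ e ∈ T, p e ≤ B)
    (hx : ∀ e ∉ S, marginalGain F S e / p e ≤ marginalGain F S x / p x) :
    F T - F S ≤ B * (marginalGain F S x / p x) := by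
  set r := marginalGain F S x / p x
  have hr : 0 ≤ r := div_nonneg (marginalGain_nonneg hF S x) (hp x).le
  have hgain : ∀ e ∈ T, marginalGain F S e ≤ p e * r := by
    intro e _
    by_cases he : e ∈ S
    · simpa [marginalGain, insert_eq_of_mem he] using mul_nonneg (hp e).le hr
    · rw [mul_comm, ← div_le_iff₀ (hp e)]
      exact hx e he
  calc F T - F S ≤ ∑ e ∈ T, marginalGain F S e := by linarith
    _ ≤ ∑ e ∈ T, p e * r := sum_le_sum hgain
    _ = (∑ e ∈ T, p e) * r := (sum_mul ..).symm
    _ ≤ B * r := mul_le_mul_of_nonneg_right hT hr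

theorem le_mul_prod_of_succ_le {u c : ℕ → ℝ} {N : ℕ} (hu : ∀ n < N, u (n + 1) ≤ c n * u n)
    (hc : ∀ n < N, 0 ≤ c n) : u N ≤ u 0 * ∏ i ∈ range N, c i := by
  induction N with
  | zero => simp
  | succ N ih =>
    calc u (N + 1) ≤ c N * u N := hu N N.lt_succ_self
      _ ≤ c N * (u 0 * ∏ i ∈ range N, c i) := by
          gcongr
          · exact hc N N.lt_succ_self
          · exact ih (fun n hn ↦ hu n (hn.trans N.lt_succ_self))
              (fun n hn ↦ hc n (hn.trans N.lt_succ_self))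
      _ = u 0 * ∏ i ∈ range (N + 1), c i := by rw [prod_range_succ]; ring

theorem prod_one_sub_le_exp_neg_sum {κ : Type*} (s : Finset κ) {c : κ → ℝ}
    (hc : ∀ i ∈ s, c i ≤ 1) : ∏ i ∈ s, (1 - c i) ≤ Real.exp (-∑ i ∈ s, c i) := by
  rw [← sum_neg_distrib, Real.exp_sum]
  refine prod_le_prod (fun i hi ↦ sub_nonneg.2 (hc i hi)) fun i _ ↦ ?_
  linarith [Real.add_one_le_exp (-c i)]

theorem one_sub_exp_neg_one_mul_le_of_greedy (hF : Monotone F) (hF₀ : 0 ≤ F ∅)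
    (hsub : ∀ S T, F T ≤ F S + ∑ e ∈ T, marginalGain F S e)
    (hp : ∀ e, 0 < p e) (hB : 0 < B) {N : ℕ} {d : ℕ → ι}
    (hgreedy : ∀ i < N, ∀ e ∉ (range i).image d,
      marginalGain F ((range i).image d) e / p e ≤
        marginalGain F ((range i).image d) (d i) / p (d i))
    (hle : ∀ i < N, p (d i) ≤ B) (hover : B < ∑ i ∈ range N, p (d i))
    {T : Finset ι} (hT : ∑ e ∈ T, p e ≤ B) :
    (1 - Real.exp (-1)) * F T ≤ F ((range N).image d) := by
  set u : ℕ → ℝ := fun i ↦ F T - F ((range i).image d)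
  have hstep : ∀ i < N, u (i + 1) ≤ (1 - p (d i) / B) * u i := by
    intro i hi
    have hgap := sub_le_mul_marginalGain_div_of_greedy hF hp (hsub _ T) hT (hgreedy i hi)
    have hsucc : u (i + 1) = u i - marginalGain F ((range i).image d) (d i) := by
      simp only [u, marginalGain, range_add_one, image_insert]
      ring
    have hpi := hp (d i)
    have hdecrease : p (d i) / B * u i ≤ marginalGain F ((range i).image d) (d i) :=
      calc p (d i) / B * u i
          ≤ p (d i) / B * (B * (marginalGain F ((range i).image d) (d i) / p (d i))) := by
            gcongr
        _ = marginalGain F ((range i).image d) (d i) := by field_simp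
    rw [hsucc]
    linarith
  have hfactor : ∀ i < N, 0 ≤ 1 - p (d i) / B :=
    fun i hi ↦ sub_nonneg.2 ((div_le_one hB).2 (hle i hi))
  have hT₀ : 0 ≤ F T := hF₀.trans (hF (empty_subset T))
  have hu₀ : u 0 ≤ F T := by simpa [u] using hF₀
  have hprod : ∏ i ∈ range N, (1 - p (d i) / B) ≤ Real.exp (-1) := by
    refine (prod_one_sub_le_exp_neg_sum _
      fun i hi ↦ (div_le_one hB).2 (hle i (mem_range.1 hi))).trans ?_
    rw [Real.exp_le_exp, neg_le_neg_iff, ← sum_div]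
    exact ((one_lt_div hB).2 hover).le
  have hgap : u N ≤ F T * Real.exp (-1) :=
    calc u N ≤ u 0 * ∏ i ∈ range N, (1 - p (d i) / B) := le_mul_prod_of_succ_le hstep hfactor
      _ ≤ F T * Real.exp (-1) :=
          mul_le_mul hu₀ hprod (prod_nonneg fun i hi ↦ hfactor i (mem_range.1 hi)) hT₀
  simp only [u] at hgap
  linarith

end Greedy

theorem budget_violation_bound_general {α ι : Type*} [DecidableEq α] [DecidableEq ι]
    (f₀ : Finset α) (f : ι → Finset α) (p : ι → ℝ) (hp : ∀ e, 0 < p e)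
    (B : ℝ) (hB : 0 < B) (m : ℕ) (d : ℕ → ι)
    (hgreedy : ∀ i < m + 1, ∀ e : ι, e ∉ (Finset.range i).image d →
      ((distinctiveness f₀ f (insert e ((Finset.range i).image d)) : ℝ) -
          distinctiveness f₀ f ((Finset.range i).image d)) / p e ≤
        ((distinctiveness f₀ f (insert (d i) ((Finset.range i).image d)) : ℝ) -
          distinctiveness f₀ f ((Finset.range i).image d)) / p (d i))
    (hple : ∀ i < m + 1, p (d i) ≤ B)
    (hover : B < ∑ i ∈ Finset.range (m + 1), p (d i))
    (Sstar : Finset ι) (hfeas : ∑ e ∈ Sstar, p e ≤ B) :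
    (1 - 1 / Real.exp 1) * (distinctiveness f₀ f Sstar : ℝ) ≤
      (distinctiveness f₀ f ((Finset.range (m + 1)).image d) : ℝ) := by
  rw [one_div, ← Real.exp_neg]
  exact one_sub_exp_neg_one_mul_le_of_greedy (Nat.mono_cast.comp (distinctiveness_mono f₀ f))
    (Nat.cast_nonneg _) (distinctiveness_le_add_sum_marginalGain f₀ f) hp hB hgreedy hple hover
    hfeas

/-- Budget-violation bound (Khuller–Moss–Naor lemma in this setting): if distinct
datasets `d 0, …, d m` are chosen greedily by cost-effectiveness ratio
(with `S_i = {d 0, …, d (i−1)}`), each has price at most the budget `B`, and their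
total price exceeds `B`, then for every feasible set `S*` (total price ≤ B),
`𝒟(S_{m+1}) ≥ (1 − 1/e) · 𝒟(S*)`. -/
theorem budget_violation_bound {α ι : Type*} [DecidableEq α] [Fintype ι] [DecidableEq ι]
    (f₀ : Finset α) (f : ι → Finset α) (p : ι → ℝ) (hp : ∀ e, 0 < p e)
    (B : ℝ) (hB : 0 < B) (m : ℕ) (d : ℕ → ι) (hinj : Set.InjOn d (Set.Iio (m + 1)))
    (hgreedy : ∀ i < m + 1, ∀ e : ι, e ∉ (Finset.range i).image d →
      ((distinctiveness f₀ f (insert e ((Finset.range i).image d)) : ℝ) -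
          distinctiveness f₀ f ((Finset.range i).image d)) / p e ≤
        ((distinctiveness f₀ f (insert (d i) ((Finset.range i).image d)) : ℝ) -
          distinctiveness f₀ f ((Finset.range i).image d)) / p (d i))
    (hple : ∀ i < m + 1, p (d i) ≤ B)
    (hover : B < ∑ i ∈ Finset.range (m + 1), p (d i))
    (Sstar : Finset ι) (hfeas : ∑ e ∈ Sstar, p e ≤ B) :
    (1 - 1 / Real.exp 1) * (distinctiveness f₀ f Sstar : ℝ) ≤
      (distinctiveness f₀ f ((Finset.range (m + 1)).image d) : ℝ) :=
  budget_violation_bound_general f₀ f p hp B hB m d hgreedy hple hover Sstar hfeas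
end
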